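/- arXiv:1103.1143 — 2 statements merged into one kernel-verified Lean document; each statement's English description precedes it below -/
import Mathlib

section
/- For all κ, λ > 0: 1/γ ≤ (1/φ_κ^λ)·(1 + max((κ + φ_κ^λ)/γ_R, (λ + φ_κ^λ)/γ_{X∖R})). -/
open Finset

noncomputable section

/-- Irreducibility of a finite nonnegative matrix: any state reaches any other. -/
def Irred {n : Type*} [Fintype n] [DecidableEq n] (P : Matrix n n ℝ) : Prop :=
  ∀ x y, ∃ k : ℕ, 0 < (P ^ k) x y

/-- The restricted ensemble `μ_R(x) = μ(x)/μ(R)` (as a function on all of `X`). -/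
def muR {X : Type*} [Fintype X] (μ : X → ℝ) (R : Finset X) (x : X) : ℝ :=
  μ x / ∑ y ∈ R, μ y

/-- Escape probability `e_R(x) = Σ_{y∉R} p(x,y)`. -/
def escR {X : Type*} [Fintype X] [DecidableEq X] (p : Matrix X X ℝ) (R : Finset X)
    (x : X) : ℝ := ∑ y ∈ Rᶜ, p x y

/-- The reflected kernel `p_R` on `R`. -/
def pRefl {X : Type*} [Fintype X] [DecidableEq X] (p : Matrix X X ℝ) (R : Finset X) :
    Matrix R R ℝ :=
  fun x y => if (x : X) = (y : X) then p x x + escR p R x else p x y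

/-- The sub-Markovian killed kernel `p_R^*` on `R`. -/
def pKill {X : Type*} [Fintype X] (p : Matrix X X ℝ) (R : Finset X) : Matrix R R ℝ :=
  fun x y => p x y

/-- Mean of `f` with respect to the weight `μ` on a finite type. -/
def meanOf {n : Type*} [Fintype n] (μ : n → ℝ) (f : n → ℝ) : ℝ := ∑ x, μ x * f x

/-- Scalar product `⟨f,g⟩` with respect to the weight `μ` on a finite type. -/
def innOf {n : Type*} [Fintype n] (μ : n → ℝ) (f g : n → ℝ) : ℝ := ∑ x, μ x * f x * g x

/-- Variance of `f` with respect to the weight `μ` on a finite type. -/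
def varOf {n : Type*} [Fintype n] (μ : n → ℝ) (f : n → ℝ) : ℝ :=
  ∑ x, μ x * (f x - meanOf μ f) ^ 2

/-- Dirichlet form of the kernel `P` reversible w.r.t. `μ`. -/
def dirOf {n : Type*} [Fintype n] (P : Matrix n n ℝ) (μ : n → ℝ) (f : n → ℝ) : ℝ :=
  (1 / 2) * ∑ x, ∑ y, μ x * P x y * (f x - f y) ^ 2

/-- Spectral gap of the kernel `P` reversible w.r.t. `μ`:
`min { D(f)/Var_μ(f) : Var_μ(f) ≠ 0 }`. -/
def gapOf {n : Type*} [Fintype n] (P : Matrix n n ℝ) (μ : n → ℝ) : ℝ :=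
  sInf {r : ℝ | ∃ f : n → ℝ, varOf μ f ≠ 0 ∧ r = dirOf P μ f / varOf μ f}

/-- Spectral gap `γ_R` of the reflected process on `R`. -/
def gapR {X : Type*} [Fintype X] [DecidableEq X] (p : Matrix X X ℝ) (μ : X → ℝ)
    (R : Finset X) : ℝ :=
  gapOf (pRefl p R) (fun x : R => muR μ R x)

/-- `(κ,∞)`-capacity `C_κ(R, X∖R)` (Dirichlet principle). -/
def capK {X : Type*} [Fintype X] [DecidableEq X] (p : Matrix X X ℝ) (μ : X → ℝ)
    (R : Finset X) (κ : ℝ) : ℝ :=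
  sInf {r : ℝ | ∃ f : X → ℝ, (∀ x ∉ R, f x = 0) ∧
    r = dirOf p μ f + κ * ∑ a ∈ R, μ a * (f a - 1) ^ 2}

/-- `(∞,λ)`-capacity `C^λ(R, X∖R)` (Dirichlet principle). -/
def capL {X : Type*} [Fintype X] [DecidableEq X] (p : Matrix X X ℝ) (μ : X → ℝ)
    (R : Finset X) (l : ℝ) : ℝ :=
  sInf {r : ℝ | ∃ f : X → ℝ, (∀ x ∈ R, f x = 1) ∧
    r = dirOf p μ f + l * ∑ b ∈ Rᶜ, μ b * f b ^ 2}

/-- `(κ,λ)`-capacity `C_κ^λ(A, B)` (Dirichlet principle). -/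
def capKL {X : Type*} [Fintype X] [DecidableEq X] (p : Matrix X X ℝ) (μ : X → ℝ)
    (A B : Finset X) (κ l : ℝ) : ℝ :=
  sInf {r : ℝ | ∃ f : X → ℝ,
    r = dirOf p μ f + κ * ∑ a ∈ A, μ a * (f a - 1) ^ 2 + l * ∑ b ∈ B, μ b * f b ^ 2}

/-!
Split `Var_μ f = μ(R) Var_{μ_R} f + μ(Rᶜ) Var_{μ_{Rᶜ}} f + μ(R) μ(Rᶜ) (m_R - m_{Rᶜ})²` along the
partition `{R, Rᶜ}` (law of total variance). The two restricted variances are controlled by the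
spectral gaps of the reflected chains, whose weighted Dirichlet forms add up to at most `D(f)`.
For the cross term, `(f - m_{Rᶜ}) / (m_R - m_{Rᶜ})` is a test function for `C_κ^λ`, so
`C_κ^λ (m_R - m_{Rᶜ})² ≤ D(f) + κ μ(R) Var_{μ_R} f + λ μ(Rᶜ) Var_{μ_{Rᶜ}} f`.
Adding up gives `φ Var_μ f ≤ (1 + M) D(f)`, where `M` is the maximum in the statement.
-/

lemma sum_mul_sub_sq {ι : Type*} (s : Finset ι) (μ f : ι → ℝ) (t : ℝ) :
    ∑ x ∈ s, μ x * (f x - t) ^ 2 =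
      ∑ x ∈ s, μ x * f x ^ 2 - 2 * t * ∑ x ∈ s, μ x * f x + t ^ 2 * ∑ x ∈ s, μ x := by
  simp only [mul_sum, ← sum_sub_distrib, ← sum_add_distrib]
  exact sum_congr rfl fun x _ => by ring

section Poincare

variable {n : Type*} [Fintype n] {P : Matrix n n ℝ} {μ : n → ℝ}

lemma dirOf_nonneg (hP : ∀ x y, 0 ≤ P x y) (hμ : ∀ x, 0 ≤ μ x) (f : n → ℝ) :
    0 ≤ dirOf P μ f :=
  mul_nonneg (by norm_num) <| sum_nonneg fun x _ => sum_nonneg fun y _ =>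
    mul_nonneg (mul_nonneg (hμ x) (hP x y)) (sq_nonneg _)

lemma varOf_nonneg (hμ : ∀ x, 0 ≤ μ x) (f : n → ℝ) : 0 ≤ varOf μ f :=
  sum_nonneg fun x _ => mul_nonneg (hμ x) (sq_nonneg _)

lemma dirOf_mul_sub (P : Matrix n n ℝ) (μ f : n → ℝ) (c d : ℝ) :
    dirOf P μ (fun x => c * (f x - d)) = c ^ 2 * dirOf P μ f := by
  have h : ∀ x y, μ x * P x y * (c * (f x - d) - c * (f y - d)) ^ 2 =
      c ^ 2 * (μ x * P x y * (f x - f y) ^ 2) := fun x y => by ring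
  simp only [dirOf, h, ← mul_sum]
  ring

lemma mul_sq_sub_le_two_mul_dirOf (hP : ∀ x y, 0 ≤ P x y) (hμ : ∀ x, 0 ≤ μ x)
    (f : n → ℝ) (x y : n) : μ x * P x y * (f x - f y) ^ 2 ≤ 2 * dirOf P μ f := by
  have hterm : ∀ x y, 0 ≤ μ x * P x y * (f x - f y) ^ 2 := fun x y =>
    mul_nonneg (mul_nonneg (hμ x) (hP x y)) (sq_nonneg _)
  calc μ x * P x y * (f x - f y) ^ 2 ≤ ∑ y', μ x * P x y' * (f x - f y') ^ 2 :=
        single_le_sum (fun y' _ => hterm x y') (mem_univ y)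
    _ ≤ ∑ x', ∑ y', μ x' * P x' y' * (f x' - f y') ^ 2 :=
        single_le_sum (f := fun x' => ∑ y', μ x' * P x' y' * (f x' - f y') ^ 2)
          (fun x' _ => sum_nonneg fun y' _ => hterm x' y') (mem_univ x)
    _ = 2 * dirOf P μ f := by unfold dirOf; ring

lemma exists_pos_mul_sq_sub_le_dirOf_of_pow_pos [DecidableEq n] (hP : ∀ x y, 0 ≤ P x y)
    (hμ : ∀ x, 0 < μ x) (k : ℕ) :
    ∀ x y, 0 < (P ^ k) x y → ∃ c > 0, ∀ f : n → ℝ, c * (f x - f y) ^ 2 ≤ dirOf P μ f := by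
  induction k with
  | zero =>
    intro x y hxy
    obtain rfl : x = y := by
      by_contra h
      simp [h] at hxy
    exact ⟨1, one_pos, fun f => by simpa using dirOf_nonneg hP (fun z => (hμ z).le) f⟩
  | succ k ih =>
    intro x y hxy
    rw [pow_succ', Matrix.mul_apply] at hxy
    obtain ⟨z, -, hz⟩ := exists_lt_of_sum_lt (f := fun _ => (0 : ℝ)) (by simpa using hxy)
    have hxz : 0 < P x z := (hP x z).lt_of_ne' (left_ne_zero_of_mul hz.ne')
    obtain ⟨c, hc, hcf⟩ := ih z y (pos_of_mul_pos_right hz (hP x z))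
    have hw : 0 < μ x * P x z := mul_pos (hμ x) hxz
    refine ⟨min (μ x * P x z) c / 6, by positivity, fun f => ?_⟩
    -- walk from `x` to `y` through `z`: `(a + b)² ≤ 2a² + 2b²`
    have hedge := mul_sq_sub_le_two_mul_dirOf hP (fun u => (hμ u).le) f x z
    have hpath := hcf f
    have h1 := mul_le_mul_of_nonneg_right (min_le_left (μ x * P x z) c) (sq_nonneg (f x - f z))
    have h2 := mul_le_mul_of_nonneg_right (min_le_right (μ x * P x z) c) (sq_nonneg (f z - f y))
    nlinarith [mul_nonneg (le_min hw.le hc.le) (sq_nonneg (f x - 2 * f z + f y))]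

lemma exists_pos_mul_sq_sub_le_dirOf [DecidableEq n] (hP : ∀ x y, 0 ≤ P x y)
    (hμ : ∀ x, 0 < μ x) (hirr : Irred P) (x y : n) :
    ∃ c > 0, ∀ f : n → ℝ, c * (f x - f y) ^ 2 ≤ dirOf P μ f :=
  let ⟨k, hk⟩ := hirr x y
  exists_pos_mul_sq_sub_le_dirOf_of_pow_pos hP hμ k x y hk

lemma varOf_eq_sum_sub_sq (hμ1 : ∑ x, μ x = 1) (f : n → ℝ) :
    varOf μ f = ∑ x, μ x * f x ^ 2 - meanOf μ f ^ 2 := by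
  rw [varOf, sum_mul_sub_sq, hμ1]
  unfold meanOf
  ring

lemma varOf_eq_half_sum_sum (hμ1 : ∑ x, μ x = 1) (f : n → ℝ) :
    varOf μ f = 1 / 2 * ∑ x, ∑ y, μ x * μ y * (f x - f y) ^ 2 := by
  have inner : ∀ x, ∑ y, μ x * μ y * (f x - f y) ^ 2 =
      μ x * ∑ y, μ y * f y ^ 2 - 2 * meanOf μ f * (μ x * f x) + μ x * f x ^ 2 := by
    intro x
    have h := sum_mul_sub_sq univ μ f (f x)
    rw [hμ1] at h
    calc ∑ y, μ x * μ y * (f x - f y) ^ 2 = μ x * ∑ y, μ y * (f y - f x) ^ 2 := by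
          rw [mul_sum]; exact sum_congr rfl fun y _ => by ring
      _ = _ := by rw [h]; unfold meanOf; ring
  rw [varOf_eq_sum_sub_sq hμ1, sum_congr rfl fun x _ => inner x, sum_add_distrib,
    sum_sub_distrib, ← sum_mul, ← mul_sum, hμ1]
  unfold meanOf
  ring

lemma eq_meanOf_of_varOf_eq_zero (hμ : ∀ x, 0 < μ x) {f : n → ℝ} (h : varOf μ f = 0)
    (x : n) : f x = meanOf μ f := by
  have hx := (sum_eq_zero_iff_of_nonneg fun z _ =>
    mul_nonneg (hμ z).le (sq_nonneg (f z - meanOf μ f))).mp h x (mem_univ x)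
  exact sub_eq_zero.mp (pow_eq_zero_iff two_ne_zero |>.mp
    ((mul_eq_zero.mp hx).resolve_left (hμ x).ne'))

lemma exists_varOf_ne_zero [Nontrivial n] (hμ : ∀ x, 0 < μ x) : ∃ f : n → ℝ, varOf μ f ≠ 0 := by
  classical
  obtain ⟨a, b, hab⟩ := exists_pair_ne n
  refine ⟨fun x => if x = a then 1 else 0, fun h => ?_⟩
  have := (eq_meanOf_of_varOf_eq_zero hμ h a).trans (eq_meanOf_of_varOf_eq_zero hμ h b).symm
  simp [hab.symm] at this

lemma gapOf_mul_varOf_le (hP : ∀ x y, 0 ≤ P x y) (hμ : ∀ x, 0 ≤ μ x) (f : n → ℝ) :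
    gapOf P μ * varOf μ f ≤ dirOf P μ f := by
  rcases (varOf_nonneg hμ f).eq_or_lt with hv | hv
  · rw [← hv, mul_zero]
    exact dirOf_nonneg hP hμ f
  · have hbdd : BddBelow {r : ℝ | ∃ g, varOf μ g ≠ 0 ∧ r = dirOf P μ g / varOf μ g} :=
      ⟨0, by
        rintro _ ⟨g, -, rfl⟩
        exact div_nonneg (dirOf_nonneg hP hμ g) (varOf_nonneg hμ g)⟩
    rw [← le_div_iff₀ hv]
    exact csInf_le hbdd ⟨f, hv.ne', rfl⟩

lemma le_gapOf (hμ : ∀ x, 0 ≤ μ x) (hne : ∃ f : n → ℝ, varOf μ f ≠ 0) {c : ℝ}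
    (hc : ∀ f, c * varOf μ f ≤ dirOf P μ f) : c ≤ gapOf P μ := by
  obtain ⟨f, hf⟩ := hne
  refine le_csInf ⟨_, f, hf, rfl⟩ ?_
  rintro _ ⟨g, hg, rfl⟩
  rw [le_div_iff₀ ((varOf_nonneg hμ g).lt_of_ne' hg)]
  exact hc g

lemma gapOf_pos [DecidableEq n] [Nontrivial n] (hP : ∀ x y, 0 ≤ P x y) (hμ : ∀ x, 0 < μ x)
    (hμ1 : ∑ x, μ x = 1) (hirr : Irred P) : 0 < gapOf P μ := by
  choose c hc hcf using exists_pos_mul_sq_sub_le_dirOf hP hμ hirr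
  set K := 1 / 2 * ∑ x, ∑ y, μ x * μ y / c x y
  have hK : 0 < K := mul_pos (by norm_num) <| sum_pos (fun x _ => sum_pos
    (fun y _ => div_pos (mul_pos (hμ x) (hμ y)) (hc x y)) univ_nonempty) univ_nonempty
  have hvar : ∀ f, varOf μ f ≤ K * dirOf P μ f := by
    intro f
    rw [varOf_eq_half_sum_sum hμ1]
    calc 1 / 2 * ∑ x, ∑ y, μ x * μ y * (f x - f y) ^ 2
        ≤ 1 / 2 * ∑ x, ∑ y, μ x * μ y / c x y * dirOf P μ f := by
          refine mul_le_mul_of_nonneg_left (sum_le_sum fun x _ => sum_le_sum fun y _ => ?_)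
            (by norm_num)
          rw [div_mul_eq_mul_div, le_div_iff₀ (hc x y)]
          nlinarith [mul_le_mul_of_nonneg_left (hcf x y f) (mul_pos (hμ x) (hμ y)).le]
      _ = K * dirOf P μ f := by simp only [K, mul_assoc, ← sum_mul]
  refine lt_of_lt_of_le (one_div_pos.mpr hK) (le_gapOf (fun x => (hμ x).le)
    (exists_varOf_ne_zero hμ) fun f => ?_)
  rw [one_div_mul_eq_div, div_le_iff₀ hK]
  linarith [hvar f]

end Poincare

section Restriction

variable {X : Type*} [Fintype X] {p : Matrix X X ℝ} {μ : X → ℝ} {R : Finset X}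

lemma muR_nonneg (hμ : ∀ x, 0 ≤ μ x) (R : Finset X) (x : X) : 0 ≤ muR μ R x :=
  div_nonneg (hμ x) (sum_nonneg fun y _ => hμ y)

lemma mul_sum_muR (hR : ∑ y ∈ R, μ y ≠ 0) (g : X → ℝ) :
    (∑ y ∈ R, μ y) * ∑ x : R, muR μ R x * g x = ∑ x ∈ R, μ x * g x := by
  rw [sum_coe_sort R (fun x => muR μ R x * g x), mul_sum]
  exact sum_congr rfl fun x _ => by unfold muR; field_simp

lemma sum_muR (hR : ∑ y ∈ R, μ y ≠ 0) : ∑ x : R, muR μ R x = 1 := by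
  simpa [hR] using mul_sum_muR hR (fun _ => 1)

lemma mul_meanOf_restrict (hR : ∑ y ∈ R, μ y ≠ 0) (f : X → ℝ) :
    (∑ y ∈ R, μ y) * meanOf (fun x : R => muR μ R x) (fun x : R => f x) = ∑ x ∈ R, μ x * f x :=
  mul_sum_muR hR f

lemma mul_varOf_restrict (hR : ∑ y ∈ R, μ y ≠ 0) (f : X → ℝ) :
    (∑ y ∈ R, μ y) * varOf (fun x : R => muR μ R x) (fun x : R => f x) =
      ∑ x ∈ R, μ x * (f x - meanOf (fun x : R => muR μ R x) (fun x : R => f x)) ^ 2 :=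
  mul_sum_muR hR fun x => (f x - meanOf (fun x : R => muR μ R x) (fun x : R => f x)) ^ 2

variable [DecidableEq X]

lemma pRefl_nonneg (hp : ∀ x y, 0 ≤ p x y) (R : Finset X) (x y : R) : 0 ≤ pRefl p R x y := by
  unfold pRefl escR
  split_ifs
  exacts [add_nonneg (hp _ _) (sum_nonneg fun z _ => hp _ _), hp _ _]

lemma mul_dirOf_pRefl (hR : ∑ y ∈ R, μ y ≠ 0) (f : X → ℝ) :
    (∑ y ∈ R, μ y) * dirOf (pRefl p R) (fun x : R => muR μ R x) (fun x : R => f x) =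
      1 / 2 * ∑ x ∈ R, ∑ y ∈ R, μ x * p x y * (f x - f y) ^ 2 := by
  -- the extra mass `escR` of `pRefl` sits on the diagonal, where `f x - f y` vanishes
  have hdiag : ∀ x y : R, muR μ R x * pRefl p R x y * (f x - f y) ^ 2 =
      muR μ R x * (p x y * (f x - f y) ^ 2) := by
    intro x y
    by_cases h : (x : X) = y <;> simp [pRefl, h, mul_assoc]
  simp only [dirOf, hdiag, ← mul_sum]
  rw [mul_left_comm, mul_sum_muR hR fun x => ∑ y : R, p x y * (f x - f y) ^ 2]
  simp only [mul_sum, mul_assoc]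
  exact sum_congr rfl fun x _ => sum_coe_sort R fun y => 1 / 2 * (μ x * (p x y * (f x - f y) ^ 2))

lemma mul_dirOf_pRefl_add_le (hp : ∀ x y, 0 ≤ p x y) (hμ : ∀ x, 0 ≤ μ x)
    (hR : ∑ y ∈ R, μ y ≠ 0) (hRc : ∑ y ∈ Rᶜ, μ y ≠ 0) (f : X → ℝ) :
    (∑ y ∈ R, μ y) * dirOf (pRefl p R) (fun x : R => muR μ R x) (fun x : R => f x) +
      (∑ y ∈ Rᶜ, μ y) * dirOf (pRefl p Rᶜ) (fun x : ↥Rᶜ => muR μ Rᶜ x) (fun x : ↥Rᶜ => f x) ≤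
      dirOf p μ f := by
  have hsub : ∀ s : Finset X, ∑ x ∈ s, ∑ y ∈ s, μ x * p x y * (f x - f y) ^ 2 ≤
      ∑ x ∈ s, ∑ y, μ x * p x y * (f x - f y) ^ 2 := fun s =>
    sum_le_sum fun x _ => sum_le_sum_of_subset_of_nonneg (subset_univ s) fun y _ _ =>
      mul_nonneg (mul_nonneg (hμ x) (hp x y)) (sq_nonneg _)
  rw [mul_dirOf_pRefl hR, mul_dirOf_pRefl hRc, dirOf,
    ← sum_add_sum_compl R (fun x => ∑ y, μ x * p x y * (f x - f y) ^ 2)]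
  linarith [hsub R, hsub Rᶜ]

lemma varOf_eq_restrict (hμ1 : ∑ x, μ x = 1) (hR : ∑ y ∈ R, μ y ≠ 0)
    (hRc : ∑ y ∈ Rᶜ, μ y ≠ 0) (f : X → ℝ) :
    varOf μ f =
      (∑ y ∈ R, μ y) * varOf (fun x : R => muR μ R x) (fun x : R => f x) +
      (∑ y ∈ Rᶜ, μ y) * varOf (fun x : ↥Rᶜ => muR μ Rᶜ x) (fun x : ↥Rᶜ => f x) +
      (∑ y ∈ R, μ y) * (∑ y ∈ Rᶜ, μ y) *
        (meanOf (fun x : R => muR μ R x) (fun x : R => f x) -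
          meanOf (fun x : ↥Rᶜ => muR μ Rᶜ x) (fun x : ↥Rᶜ => f x)) ^ 2 := by
  have hmR := mul_meanOf_restrict hR f
  have hmRc := mul_meanOf_restrict hRc f
  have hVR := mul_varOf_restrict hR f
  have hVRc := mul_varOf_restrict hRc f
  rw [sum_mul_sub_sq, ← hmR] at hVR
  rw [sum_mul_sub_sq, ← hmRc] at hVRc
  have hmass : ∑ y ∈ R, μ y + ∑ y ∈ Rᶜ, μ y = 1 := by rw [sum_add_sum_compl, hμ1]
  have hmean : meanOf μ f = ∑ x ∈ R, μ x * f x + ∑ x ∈ Rᶜ, μ x * f x :=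
    (sum_add_sum_compl R _).symm
  rw [varOf_eq_sum_sub_sq hμ1, hmean, ← hmR, ← hmRc, ← sum_add_sum_compl R]
  linear_combination -hVR - hVRc -
    ((∑ y ∈ R, μ y) * meanOf (fun x : R => muR μ R x) (fun x : R => f x) ^ 2 +
      (∑ y ∈ Rᶜ, μ y) * meanOf (fun x : ↥Rᶜ => muR μ Rᶜ x) (fun x : ↥Rᶜ => f x) ^ 2) * hmass

end Restriction

section Capacity

variable {X : Type*} [Fintype X] {p : Matrix X X ℝ} {μ : X → ℝ} {A B : Finset X} {κ l : ℝ}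

lemma dirOf_add_penalties_nonneg (hp : ∀ x y, 0 ≤ p x y) (hμ : ∀ x, 0 ≤ μ x) (hκ : 0 ≤ κ)
    (hl : 0 ≤ l) (f : X → ℝ) (a b : ℝ) :
    0 ≤ dirOf p μ f + κ * ∑ x ∈ A, μ x * (f x - a) ^ 2 + l * ∑ x ∈ B, μ x * (f x - b) ^ 2 := by
  have hA : 0 ≤ ∑ x ∈ A, μ x * (f x - a) ^ 2 :=
    sum_nonneg fun x _ => mul_nonneg (hμ x) (sq_nonneg _)
  have hB : 0 ≤ ∑ x ∈ B, μ x * (f x - b) ^ 2 :=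
    sum_nonneg fun x _ => mul_nonneg (hμ x) (sq_nonneg _)
  have := dirOf_nonneg hp hμ f
  positivity

variable [DecidableEq X]

lemma capKL_le (hp : ∀ x y, 0 ≤ p x y) (hμ : ∀ x, 0 ≤ μ x) (hκ : 0 ≤ κ) (hl : 0 ≤ l)
    (f : X → ℝ) :
    capKL p μ A B κ l ≤
      dirOf p μ f + κ * ∑ a ∈ A, μ a * (f a - 1) ^ 2 + l * ∑ b ∈ B, μ b * f b ^ 2 :=
  csInf_le ⟨0, by
    rintro _ ⟨g, rfl⟩
    simpa using dirOf_add_penalties_nonneg (A := A) (B := B) hp hμ hκ hl g 1 0⟩ ⟨f, rfl⟩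

lemma capKL_mul_sq_sub_le (hp : ∀ x y, 0 ≤ p x y) (hμ : ∀ x, 0 ≤ μ x) (hκ : 0 ≤ κ)
    (hl : 0 ≤ l) (f : X → ℝ) (a b : ℝ) :
    capKL p μ A B κ l * (a - b) ^ 2 ≤
      dirOf p μ f + κ * ∑ x ∈ A, μ x * (f x - a) ^ 2 + l * ∑ x ∈ B, μ x * (f x - b) ^ 2 := by
  rcases eq_or_ne a b with rfl | hab
  · rw [sub_self, zero_pow two_ne_zero, mul_zero]
    exact dirOf_add_penalties_nonneg hp hμ hκ hl f a a
  -- test `capKL` against the affine rescaling of `f` that is `1` at level `a` and `0` at level `b`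
  set c := (a - b)⁻¹
  have hc1 : c * (a - b) = 1 := inv_mul_cancel₀ (sub_ne_zero.mpr hab)
  have hc : c ^ 2 * (a - b) ^ 2 = 1 := by rw [← mul_pow, hc1, one_pow]
  have hA : ∑ x ∈ A, μ x * (c * (f x - b) - 1) ^ 2 = c ^ 2 * ∑ x ∈ A, μ x * (f x - a) ^ 2 := by
    rw [mul_sum]
    refine sum_congr rfl fun x _ => ?_
    have : c * (f x - b) - 1 = c * (f x - a) := by linear_combination hc1
    rw [this]
    ring
  have hB : ∑ x ∈ B, μ x * (c * (f x - b)) ^ 2 = c ^ 2 * ∑ x ∈ B, μ x * (f x - b) ^ 2 := by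
    rw [mul_sum]
    exact sum_congr rfl fun x _ => by ring
  have hcap := capKL_le (A := A) (B := B) hp hμ hκ hl fun x => c * (f x - b)
  rw [dirOf_mul_sub, hA, hB] at hcap
  calc capKL p μ A B κ l * (a - b) ^ 2
      ≤ c ^ 2 * (dirOf p μ f + κ * ∑ x ∈ A, μ x * (f x - a) ^ 2 +
          l * ∑ x ∈ B, μ x * (f x - b) ^ 2) * (a - b) ^ 2 := by
        gcongr
        linarith
    _ = _ := by rw [mul_right_comm, hc, one_mul]

lemma capKL_pos (hp : ∀ x y, 0 ≤ p x y) (hμ : ∀ x, 0 < μ x) (hirr : Irred p) (hκ : 0 < κ)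
    (hl : 0 < l) {a b : X} (ha : a ∈ A) (hb : b ∈ B) : 0 < capKL p μ A B κ l := by
  obtain ⟨c, hc, hcf⟩ := exists_pos_mul_sq_sub_le_dirOf hp hμ hirr a b
  set m := min c (min (κ * μ a) (l * μ b))
  have hm : 0 < m := lt_min hc (lt_min (mul_pos hκ (hμ a)) (mul_pos hl (hμ b)))
  refine (by positivity : 0 < m / 3).trans_le (le_csInf ⟨_, 0, rfl⟩ ?_)
  rintro _ ⟨f, rfl⟩
  have hA : μ a * (f a - 1) ^ 2 ≤ ∑ x ∈ A, μ x * (f x - 1) ^ 2 :=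
    single_le_sum (f := fun x => μ x * (f x - 1) ^ 2)
      (fun x _ => mul_nonneg (hμ x).le (sq_nonneg _)) ha
  have hB : μ b * f b ^ 2 ≤ ∑ x ∈ B, μ x * f x ^ 2 :=
    single_le_sum (f := fun x => μ x * f x ^ 2) (fun x _ => mul_nonneg (hμ x).le (sq_nonneg _)) hb
  -- the three gaps `f a - f b`, `1 - f a`, `f b` add up to `1`
  have hsq : 1 / 3 ≤ (f a - f b) ^ 2 + (f a - 1) ^ 2 + f b ^ 2 := by
    nlinarith [sq_nonneg (f a - f b - (1 - f a)), sq_nonneg (f a - 2 * f b),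
      sq_nonneg (1 - f a - f b)]
  have hmc : m ≤ c := min_le_left _ _
  have hma : m ≤ κ * μ a := (min_le_right _ _).trans (min_le_left _ _)
  have hmb : m ≤ l * μ b := (min_le_right _ _).trans (min_le_right _ _)
  nlinarith [hcf f, mul_le_mul_of_nonneg_right hmc (sq_nonneg (f a - f b)),
    mul_le_mul_of_nonneg_right hma (sq_nonneg (f a - 1)),
    mul_le_mul_of_nonneg_right hmb (sq_nonneg (f b)), mul_le_mul_of_nonneg_left hA hκ.le,
    mul_le_mul_of_nonneg_left hB hl.le,
    mul_le_mul_of_nonneg_left hsq hm.le]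

end Capacity

lemma gapR_pos {X : Type*} [Fintype X] [DecidableEq X] {p : Matrix X X ℝ} {μ : X → ℝ}
    {R : Finset X} (hp : ∀ x y, 0 ≤ p x y) (hμ : ∀ x, 0 < μ x) (hR : 2 ≤ R.card)
    (hirr : Irred (pRefl p R)) : 0 < gapR p μ R := by
  have : Nontrivial R := Fintype.one_lt_card_iff_nontrivial.mp (by rw [Fintype.card_coe]; omega)
  have hmass : 0 < ∑ y ∈ R, μ y := sum_pos (fun x _ => hμ x) (card_pos.mp (by omega))
  exact gapOf_pos (pRefl_nonneg hp R) (fun x => div_pos (hμ x) hmass) (sum_muR hmass.ne') hirr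

theorem capKL_div_mul_varOf_le {X : Type*} [Fintype X] [DecidableEq X] {p : Matrix X X ℝ}
    {μ : X → ℝ} {R : Finset X} {κ l M : ℝ} (hp : ∀ x y, 0 ≤ p x y) (hμ : ∀ x, 0 ≤ μ x)
    (hμ1 : ∑ x, μ x = 1) (hκ : 0 ≤ κ) (hl : 0 ≤ l) (hR : 0 < ∑ y ∈ R, μ y)
    (hRc : 0 < ∑ y ∈ Rᶜ, μ y) (hM : 0 ≤ M)
    (hMR : κ + capKL p μ R Rᶜ κ l / ((∑ y ∈ R, μ y) * ∑ y ∈ Rᶜ, μ y) ≤ M * gapR p μ R)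
    (hMRc : l + capKL p μ R Rᶜ κ l / ((∑ y ∈ R, μ y) * ∑ y ∈ Rᶜ, μ y) ≤ M * gapR p μ Rᶜ)
    (f : X → ℝ) :
    capKL p μ R Rᶜ κ l / ((∑ y ∈ R, μ y) * ∑ y ∈ Rᶜ, μ y) * varOf μ f ≤
      (1 + M) * dirOf p μ f := by
  have hγR : gapR p μ R * varOf (fun x : R => muR μ R x) (fun x : R => f x) ≤
      dirOf (pRefl p R) (fun x : R => muR μ R x) (fun x : R => f x) :=
    gapOf_mul_varOf_le (pRefl_nonneg hp R) (fun x => muR_nonneg hμ R x) _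
  have hγRc : gapR p μ Rᶜ * varOf (fun x : ↥Rᶜ => muR μ Rᶜ x) (fun x : ↥Rᶜ => f x) ≤
      dirOf (pRefl p Rᶜ) (fun x : ↥Rᶜ => muR μ Rᶜ x) (fun x : ↥Rᶜ => f x) :=
    gapOf_mul_varOf_le (pRefl_nonneg hp Rᶜ) (fun x => muR_nonneg hμ Rᶜ x) _
  have hdir := mul_dirOf_pRefl_add_le hp hμ hR.ne' hRc.ne' f
  have hcap := capKL_mul_sq_sub_le (A := R) (B := Rᶜ) hp hμ hκ hl f
    (meanOf (fun x : R => muR μ R x) (fun x : R => f x))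
    (meanOf (fun x : ↥Rᶜ => muR μ Rᶜ x) (fun x : ↥Rᶜ => f x))
  rw [← mul_varOf_restrict hR.ne', ← mul_varOf_restrict hRc.ne'] at hcap
  rw [varOf_eq_restrict hμ1 hR.ne' hRc.ne' f]
  have hVR := varOf_nonneg (fun x : R => muR_nonneg hμ R x) fun x : R => f x
  have hVRc := varOf_nonneg (fun x : ↥Rᶜ => muR_nonneg hμ Rᶜ x) fun x : ↥Rᶜ => f x
  set C := capKL p μ R Rᶜ κ l
  have hcross : C / ((∑ y ∈ R, μ y) * ∑ y ∈ Rᶜ, μ y) * ((∑ y ∈ R, μ y) * ∑ y ∈ Rᶜ, μ y) = C :=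
    div_mul_cancel₀ C (mul_pos hR hRc).ne'
  nlinarith [mul_le_mul_of_nonneg_right hMR (mul_nonneg hR.le hVR),
    mul_le_mul_of_nonneg_right hMRc (mul_nonneg hRc.le hVRc),
    mul_le_mul_of_nonneg_left hγR (mul_nonneg hM hR.le),
    mul_le_mul_of_nonneg_left hγRc (mul_nonneg hM hRc.le),
    mul_le_mul_of_nonneg_left hdir hM]

theorem relaxation_time_upper_bound_general
    (X : Type*) [Fintype X] [DecidableEq X]
    (p : Matrix X X ℝ) (μ : X → ℝ) (R : Finset X)
    (hp_nonneg : ∀ x y, 0 ≤ p x y)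
    (hp_irr : Irred p)
    (hμ_pos : ∀ x, 0 < μ x)
    (hμ_sum : ∑ x, μ x = 1)
    (hR_two : 2 ≤ R.card)
    (hpR_irr : Irred (pRefl p R))
    (hRc_two : 2 ≤ Rᶜ.card)
    (hpRc_irr : Irred (pRefl p Rᶜ))
    (κ l : ℝ) (hκ : 0 < κ) (hl : 0 < l) :
    1 / gapOf p μ ≤
      (1 / (capKL p μ R Rᶜ κ l / ((∑ y ∈ R, μ y) * ∑ y ∈ Rᶜ, μ y))) *
        (1 + max
          ((κ + capKL p μ R Rᶜ κ l / ((∑ y ∈ R, μ y) * ∑ y ∈ Rᶜ, μ y)) / gapR p μ R)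
          ((l + capKL p μ R Rᶜ κ l / ((∑ y ∈ R, μ y) * ∑ y ∈ Rᶜ, μ y)) / gapR p μ Rᶜ)) := by
  obtain ⟨a, ha⟩ : R.Nonempty := card_pos.mp (by omega)
  obtain ⟨b, hb⟩ : Rᶜ.Nonempty := card_pos.mp (by omega)
  have : Nontrivial X := ⟨a, b, ne_of_mem_of_not_mem ha (mem_compl.mp hb)⟩
  have hR : 0 < ∑ y ∈ R, μ y := sum_pos (fun x _ => hμ_pos x) ⟨a, ha⟩
  have hRc : 0 < ∑ y ∈ Rᶜ, μ y := sum_pos (fun x _ => hμ_pos x) ⟨b, hb⟩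
  have hγR := gapR_pos hp_nonneg hμ_pos hR_two hpR_irr
  have hγRc := gapR_pos hp_nonneg hμ_pos hRc_two hpRc_irr
  set φ := capKL p μ R Rᶜ κ l / ((∑ y ∈ R, μ y) * ∑ y ∈ Rᶜ, μ y)
  have hφ : 0 < φ := div_pos (capKL_pos hp_nonneg hμ_pos hp_irr hκ hl ha hb) (mul_pos hR hRc)
  set M := max ((κ + φ) / gapR p μ R) ((l + φ) / gapR p μ Rᶜ)
  have hM : 0 ≤ M := le_max_of_le_left (by positivity)
  have hMR : κ + φ ≤ M * gapR p μ R := (div_le_iff₀ hγR).mp (le_max_left _ _)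
  have hMRc : l + φ ≤ M * gapR p μ Rᶜ := (div_le_iff₀ hγRc).mp (le_max_right _ _)
  have hgap : φ / (1 + M) ≤ gapOf p μ :=
    le_gapOf (fun x => (hμ_pos x).le) (exists_varOf_ne_zero hμ_pos) fun f => by
      rw [div_mul_eq_mul_div, div_le_iff₀ (by positivity), mul_comm _ (1 + M)]
      exact capKL_div_mul_varOf_le hp_nonneg (fun x => (hμ_pos x).le) hμ_sum hκ.le hl.le hR hRc
        hM hMR hMRc f
  calc 1 / gapOf p μ ≤ 1 / (φ / (1 + M)) := one_div_le_one_div_of_le (by positivity) hgap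
    _ = 1 / φ * (1 + M) := by rw [one_div_div, one_div_mul_eq_div]

/-- Theorem 2.10, upper bound: a new Poincaré inequality for the relaxation time `1/γ`. -/
theorem relaxation_time_upper_bound
    (X : Type*) [Fintype X] [DecidableEq X]
    (p : Matrix X X ℝ) (μ : X → ℝ) (R : Finset X)
    (hp_nonneg : ∀ x y, 0 ≤ p x y)
    (hp_row : ∀ x, ∑ y, p x y = 1)
    (hp_irr : Irred p)
    (hμ_pos : ∀ x, 0 < μ x)
    (hμ_sum : ∑ x, μ x = 1)
    (hrev : ∀ x y, μ x * p x y = μ y * p y x)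
    (hR_ne : R.Nonempty) (hR_proper : R ≠ Finset.univ)
    (hR_two : 2 ≤ R.card)
    (hpR_irr : Irred (pRefl p R))
    (hRc_two : 2 ≤ Rᶜ.card)
    (hpRc_irr : Irred (pRefl p Rᶜ))
    (κ l : ℝ) (hκ : 0 < κ) (hl : 0 < l) :
    1 / gapOf p μ ≤
      (1 / (capKL p μ R Rᶜ κ l / ((∑ y ∈ R, μ y) * ∑ y ∈ Rᶜ, μ y))) *
        (1 + max
          ((κ + capKL p μ R Rᶜ κ l / ((∑ y ∈ R, μ y) * ∑ y ∈ Rᶜ, μ y)) / gapR p μ R)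
          ((l + capKL p μ R Rᶜ κ l / ((∑ y ∈ R, μ y) * ∑ y ∈ Rᶜ, μ y)) / gapR p μ Rᶜ)) :=
  relaxation_time_upper_bound_general X p μ R hp_nonneg hp_irr hμ_pos hμ_sum hR_two hpR_irr hRc_two
    hpRc_irr κ l hκ hl
end
end

section
/- For every f : X → ℝ with f ≡ 0 on X∖R: D_R(f|_R) ≤ D(f)/μ(R), and D(f)/μ(R) = Σ_{x∈R} μ_R(x)·f(x)·(f(x) − Σ_{y∈R} p(x,y)f(y)) (i.e. D(f)/μ(R) = ⟨f|_R, (I − p_R^*)f|_R⟩_R). -/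
/-!
Stochasticity and reversibility of `p` give the Green identity `D(f) = ⟨f, (I - p) f⟩_μ`. When `f`
vanishes off `R`, only the `R × R` block of `p` survives in the right-hand side, which becomes
`⟨f|_R, (I - p_R^*) f|_R⟩`. The reflected kernel `p_R` differs from `p_R^*` only on the diagonal,
which a Dirichlet form does not see, so `μ(R) · D_R(f|_R)` is the part of `D(f)` coming from pairs
in `R × R`; the remaining terms are nonnegative.
-/

open Finset

noncomputable section

open Matrix

section

variable {n : Type*} [Fintype n]

theorem dirOf_eq_innOf_sub_mulVec (P : Matrix n n ℝ) (μ f : n → ℝ)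
    (hrow : ∀ x, ∑ y, P x y = 1) (hrev : ∀ x y, μ x * P x y = μ y * P y x) :
    dirOf P μ f = innOf μ f (f - P *ᵥ f) := by
  have hleft : ∑ x, ∑ y, μ x * P x y * f x ^ 2 = ∑ x, μ x * f x ^ 2 := by
    refine sum_congr rfl fun x _ => ?_
    rw [← sum_mul, ← mul_sum, hrow, mul_one]
  have hright : ∑ x, ∑ y, μ x * P x y * f y ^ 2 = ∑ x, μ x * f x ^ 2 := by
    rw [sum_comm]
    simp_rw [hrev _ _]
    exact hleft
  have hcross : innOf μ f (f - P *ᵥ f)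
      = ∑ x, μ x * f x ^ 2 - ∑ x, ∑ y, μ x * P x y * (f x * f y) := by
    simp only [innOf, Pi.sub_apply, mulVec, dotProduct, ← sum_sub_distrib]
    refine sum_congr rfl fun x _ => ?_
    rw [mul_sub, mul_sum, sq, mul_assoc]
    congr 1
    exact sum_congr rfl fun y _ => by ring
  have hexpand : ∀ x y, μ x * P x y * (f x - f y) ^ 2 = μ x * P x y * f x ^ 2
      + μ x * P x y * f y ^ 2 - 2 * (μ x * P x y * (f x * f y)) := fun x y => by ring
  simp only [dirOf, hexpand, sum_add_distrib, sum_sub_distrib, ← mul_sum, hleft, hright, hcross]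
  ring

theorem dirOf_congr_offDiag {P Q : Matrix n n ℝ} (μ f : n → ℝ)
    (h : ∀ x y, x ≠ y → P x y = Q x y) : dirOf P μ f = dirOf Q μ f := by
  unfold dirOf
  congr 1
  refine sum_congr rfl fun x _ => sum_congr rfl fun y _ => ?_
  rcases eq_or_ne x y with rfl | hxy
  · simp
  · rw [h x y hxy]

theorem dirOf_div_weight (P : Matrix n n ℝ) (μ f : n → ℝ) (c : ℝ) :
    dirOf P (fun x => μ x / c) f = dirOf P μ f / c := by
  simp only [dirOf, mul_div_assoc, sum_div]
  congr 1
  refine sum_congr rfl fun x _ => sum_congr rfl fun y _ => ?_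
  ring

theorem innOf_div_weight (μ f g : n → ℝ) (c : ℝ) :
    innOf (fun x => μ x / c) f g = innOf μ f g / c := by
  simp only [innOf, sum_div]
  exact sum_congr rfl fun x _ => by ring

theorem dirOf_restrict_le (P : Matrix n n ℝ) (μ f : n → ℝ) (s : Finset n)
    (hP : ∀ x y, 0 ≤ P x y) (hμ : ∀ x, 0 ≤ μ x) :
    dirOf (fun x y : s => P x y) (fun x : s => μ x) (fun x : s => f x) ≤ dirOf P μ f := by
  have hterm : ∀ x y, 0 ≤ μ x * P x y * (f x - f y) ^ 2 := fun x y => by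
    have := hμ x; have := hP x y; positivity
  unfold dirOf
  gcongr with x
  rw [sum_coe_sort s fun x => ∑ y : s, μ x * P x y * (f x - f y) ^ 2]
  refine (sum_le_sum fun x _ => ?_).trans
    (sum_le_univ_sum_of_nonneg fun x => sum_nonneg fun y _ => hterm x y)
  rw [sum_coe_sort s fun y => μ x * P x y * (f x - f y) ^ 2]
  exact sum_le_univ_sum_of_nonneg fun y => hterm x y

variable {s : Finset n} {f : n → ℝ}

theorem innOf_restrict (μ g : n → ℝ) (hf : ∀ x ∉ s, f x = 0) :
    innOf μ f g = innOf (fun x : s => μ x) (fun x : s => f x) (fun x : s => g x) := by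
  unfold innOf
  rw [sum_coe_sort s fun x => μ x * f x * g x]
  exact (sum_subset (subset_univ s) fun x _ hx => by rw [hf x hx]; ring).symm

theorem mulVec_restrict (P : Matrix n n ℝ) (hf : ∀ x ∉ s, f x = 0) (x : s) :
    (P *ᵥ f) x = ((fun x y : s => P x y) *ᵥ fun x : s => f x) x := by
  simp only [mulVec, dotProduct]
  rw [sum_coe_sort s fun y => P x y * f y]
  exact (sum_subset (subset_univ s) fun y _ hy => by rw [hf y hy]; ring).symm

end

theorem dirichlet_restriction_general
    (X : Type*) [Fintype X] [DecidableEq X]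
    (p : Matrix X X ℝ) (μ : X → ℝ) (R : Finset X)
    (hp_nonneg : ∀ x y, 0 ≤ p x y)
    (hp_row : ∀ x, ∑ y, p x y = 1)
    (hμ_pos : ∀ x, 0 < μ x)
    (hrev : ∀ x y, μ x * p x y = μ y * p y x)
 :
    ∀ f : X → ℝ, (∀ x ∉ R, f x = 0) →
      dirOf (pRefl p R) (fun x : R => muR μ R x) (fun x : R => f x)
          ≤ dirOf p μ f / ∑ y ∈ R, μ y ∧
      dirOf p μ f / ∑ y ∈ R, μ y
          = ∑ x : R, muR μ R x * f x * (f x - ∑ y : R, p x y * f y) := by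
  intro f hf
  have hμR : 0 ≤ ∑ y ∈ R, μ y := sum_nonneg fun y _ => (hμ_pos y).le
  have hrefl : dirOf (pRefl p R) (fun x : R => muR μ R x) (fun x : R => f x)
      = dirOf (pKill p R) (fun x : R => μ x) (fun x : R => f x) / ∑ y ∈ R, μ y := by
    rw [← dirOf_div_weight]
    exact dirOf_congr_offDiag _ _ fun x y hxy => if_neg (Subtype.coe_ne_coe.mpr hxy)
  refine ⟨?_, ?_⟩
  · rw [hrefl]
    gcongr
    exact dirOf_restrict_le p μ f R hp_nonneg fun x => (hμ_pos x).le
  · rw [dirOf_eq_innOf_sub_mulVec p μ f hp_row hrev, innOf_restrict μ _ hf, ← innOf_div_weight]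
    refine sum_congr rfl fun x _ => ?_
    simp only [Pi.sub_apply, mulVec_restrict p hf x]
    rfl

/-- Lemma 3.1: for `f` vanishing outside `R`,
`D_R(f|_R) ≤ D(f)/μ(R)` and `D(f)/μ(R) = ⟨f|_R, (I − p_R^*) f|_R⟩_R`. -/
theorem dirichlet_restriction
    (X : Type*) [Fintype X] [DecidableEq X]
    (p : Matrix X X ℝ) (μ : X → ℝ) (R : Finset X)
    (hp_nonneg : ∀ x y, 0 ≤ p x y)
    (hp_row : ∀ x, ∑ y, p x y = 1)
    (hp_irr : Irred p)
    (hμ_pos : ∀ x, 0 < μ x)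
    (hμ_sum : ∑ x, μ x = 1)
    (hrev : ∀ x y, μ x * p x y = μ y * p y x)
    (hR_ne : R.Nonempty) (hR_proper : R ≠ Finset.univ)
 :
    ∀ f : X → ℝ, (∀ x ∉ R, f x = 0) →
      dirOf (pRefl p R) (fun x : R => muR μ R x) (fun x : R => f x)
          ≤ dirOf p μ f / ∑ y ∈ R, μ y ∧
      dirOf p μ f / ∑ y ∈ R, μ y
          = ∑ x : R, muR μ R x * f x * (f x - ∑ y : R, p x y * f y) :=
  dirichlet_restriction_general X p μ R hp_nonneg hp_row hμ_pos hrev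
end
end
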